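/- Let hᵢ : U → (0,∞) be smooth, i = 1,…,n, on an open set U ⊆ ℝⁿ. Suppose there exist smooth single-variable functions uᵢ(qⁱ) such that U₀(q) = Σᵢ uᵢ(qⁱ)/hᵢ(q)² is constant on U and which solve ∂uⱼ/∂qᵏ = −δᵏⱼ hₖ² Σᵢ (∂(hᵢ⁻²)/∂qᵏ) uᵢ. Then hⱼ² Σᵢ 𝒟_{jk}(hᵢ⁻²) uᵢ = 0 for all j ≠ k, where 𝒟_{jk}(f) = ∂ⱼ∂ₖf + (∂ⱼ ln hₖ²)(∂ₖf) + (∂ₖ ln hⱼ²)(∂ⱼf). -/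

import Mathlib

open scoped ContDiff


/-- Partial derivative in the `j`-th coordinate direction. -/
noncomputable def pd {n : ℕ} (j : Fin n) (f : (Fin n → ℝ) → ℝ) (q : Fin n → ℝ) : ℝ :=
  fderiv ℝ f q (Pi.single j 1)

/-- The Stäckel differential operator `𝒟_{jk}` associated to scale factors `h`. -/
noncomputable def Dst {n : ℕ} (h : Fin n → (Fin n → ℝ) → ℝ) (j k : Fin n)
    (f : (Fin n → ℝ) → ℝ) (q : Fin n → ℝ) : ℝ :=
  pd j (fun q' => pd k f q') q
    + pd j (fun q' => Real.log ((h k q') ^ 2)) q * pd k f q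
    + pd k (fun q' => Real.log ((h j q') ^ 2)) q * pd j f q

/- ### Auxiliary lemmas -/

theorem pd_comp_single {n : ℕ} (i j : Fin n) (f : ℝ → ℝ) (q : Fin n → ℝ)
    (hf : DifferentiableAt ℝ f (q i)) :
    pd j (fun q' => f (q' i)) q = if i = j then deriv f (q i) else 0 := by
  have hproj : HasFDerivAt (fun q' : Fin n → ℝ => q' i)
      (ContinuousLinearMap.proj i : (Fin n → ℝ) →L[ℝ] ℝ) q := hasFDerivAt_apply i q
  have h2 : HasFDerivAt (fun q' : Fin n → ℝ => f (q' i))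
      (deriv f (q i) • (ContinuousLinearMap.proj i : (Fin n → ℝ) →L[ℝ] ℝ)) q :=
    hf.hasDerivAt.comp_hasFDerivAt q hproj
  rw [pd, h2.fderiv]
  simp [Pi.single_apply, eq_comm]

theorem pd_congr_open {n : ℕ} {U : Set (Fin n → ℝ)} (hU : IsOpen U) {q : Fin n → ℝ}
    (hq : q ∈ U) {f g : (Fin n → ℝ) → ℝ} (hfg : ∀ x ∈ U, f x = g x) (j : Fin n) :
    pd j f q = pd j g q := by
  unfold pd
  rw [Filter.EventuallyEq.fderiv_eq (Filter.eventuallyEq_of_mem (hU.mem_nhds hq) hfg)]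

theorem pd_mul {n : ℕ} (j : Fin n) {A B : (Fin n → ℝ) → ℝ} {q : Fin n → ℝ}
    (hA : DifferentiableAt ℝ A q) (hB : DifferentiableAt ℝ B q) :
    pd j (fun q' => A q' * B q') q = pd j A q * B q + A q * pd j B q := by
  unfold pd
  rw [fderiv_fun_mul hA hB]
  simp only [ContinuousLinearMap.add_apply, ContinuousLinearMap.smul_apply, smul_eq_mul]
  ring

theorem pd_sum {n : ℕ} (j : Fin n) {F : Fin n → (Fin n → ℝ) → ℝ} {q : Fin n → ℝ}
    (hF : ∀ i, DifferentiableAt ℝ (F i) q) :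
    pd j (fun q' => ∑ i, F i q') q = ∑ i, pd j (F i) q := by
  unfold pd
  rw [fderiv_fun_sum fun i _ => hF i]
  simp

theorem pd_neg {n : ℕ} (j : Fin n) (A : (Fin n → ℝ) → ℝ) (q : Fin n → ℝ) :
    pd j (fun q' => -(A q')) q = -pd j A q := by
  unfold pd
  rw [fderiv_fun_neg]
  simp

theorem pd_comp {n : ℕ} (j : Fin n) {A : (Fin n → ℝ) → ℝ} {q : Fin n → ℝ} {φ : ℝ → ℝ} {d : ℝ}
    (hφ : HasDerivAt φ d (A q)) (hA : DifferentiableAt ℝ A q) :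
    pd j (fun q' => φ (A q')) q = d * pd j A q := by
  have h2 : HasFDerivAt (fun q' : Fin n → ℝ => φ (A q')) (d • fderiv ℝ A q) q :=
    hφ.comp_hasFDerivAt q hA.hasFDerivAt
  unfold pd
  rw [h2.fderiv]
  simp

theorem final_alg {n : ℕ} (A b d uu : Fin n → ℝ) (P Q hk2 hj2 : ℝ)
    (hk2ne : hk2 ≠ 0) (hj2ne : hj2 ≠ 0)
    (hkey : P * (∑ i, b i * uu i)
      + hk2 * ((∑ i, A i * uu i) + (-(hj2 ^ 2)⁻¹ * Q) * -(hj2 * ∑ i, d i * uu i)) = 0) :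
    hj2 * (∑ i, (A i + hk2⁻¹ * P * b i + hj2⁻¹ * Q * d i) * uu i) = 0 := by
  have e1 : (∑ i, (A i + hk2⁻¹ * P * b i + hj2⁻¹ * Q * d i) * uu i)
      = (∑ i, A i * uu i) + hk2⁻¹ * P * (∑ i, b i * uu i)
        + hj2⁻¹ * Q * (∑ i, d i * uu i) := by
    rw [Finset.mul_sum, Finset.mul_sum, ← Finset.sum_add_distrib, ← Finset.sum_add_distrib]
    exact Finset.sum_congr rfl fun i _ => by ring
  set X := ∑ i, A i * uu i
  set Y := ∑ i, b i * uu i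
  set Z := ∑ i, d i * uu i
  have h4 : hj2 * (hk2 * hj2 * (X + hk2⁻¹ * P * Y + hj2⁻¹ * Q * Z)) = 0 := by
    field_simp at hkey ⊢
    linear_combination hj2 * hkey
  have h5 : X + hk2⁻¹ * P * Y + hj2⁻¹ * Q * Z = 0 := by
    rcases mul_eq_zero.mp h4 with h6 | h6
    · exact absurd h6 hj2ne
    rcases mul_eq_zero.mp h6 with h7 | h7
    · exact absurd h7 (mul_ne_zero hk2ne hj2ne)
    · exact h7
  rw [e1, h5, mul_zero]

/-- if single-variable functions `uᵢ(qⁱ)` solve the system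
`∂uⱼ/∂qᵏ = −δᵏⱼ hₖ² Σᵢ ∂(hᵢ⁻²)/∂qᵏ uᵢ` and make `Σᵢ uᵢ(qⁱ)/hᵢ²` constant on `U`,
then `hⱼ² Σᵢ 𝒟_{jk}(hᵢ⁻²) uᵢ = 0` for all `j ≠ k` on `U`. -/
theorem staeckel_compatibility {n : ℕ} (U : Set (Fin n → ℝ)) (hU : IsOpen U)
    (h : Fin n → (Fin n → ℝ) → ℝ) (hpos : ∀ i q, 0 < h i q)
    (hsm : ∀ i, ContDiffOn ℝ (⊤ : ℕ∞) (h i) U)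
    (u : Fin n → ℝ → ℝ) (hu : ∀ i, ContDiff ℝ (⊤ : ℕ∞) (u i))
    (hconst : ∃ c : ℝ, ∀ q ∈ U, (∑ i, u i (q i) / (h i q) ^ 2) = c)
    (hsolve : ∀ (j k : Fin n), ∀ q ∈ U,
      pd k (fun q' => u j (q' j)) q
        = -(if k = j then
            (h k q) ^ 2 * ∑ i, pd k (fun q' => ((h i q') ^ 2)⁻¹) q * u i (q i)
          else 0)) :
    ∀ (j k : Fin n), j ≠ k → ∀ q ∈ U,
      (h j q) ^ 2 *
        (∑ i, Dst h j k (fun q' => ((h i q') ^ 2)⁻¹) q * u i (q i)) = 0 := by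
  intro j k hjk q hq
  classical
  -- basic nonvanishing
  have hne : ∀ (i : Fin n) (x : Fin n → ℝ), (h i x) ^ 2 ≠ 0 :=
    fun i x => pow_ne_zero 2 (hpos i x).ne'
  -- smoothness of squares and inverse squares at points of U
  have hsq : ∀ (i : Fin n), ∀ x ∈ U, ContDiffAt ℝ (⊤ : ℕ∞) (fun q' => (h i q') ^ 2) x :=
    fun i x hx => ((hsm i).contDiffAt (hU.mem_nhds hx)).pow 2
  have hgx : ∀ (i : Fin n), ∀ x ∈ U, ContDiffAt ℝ (⊤ : ℕ∞) (fun q' => ((h i q') ^ 2)⁻¹) x :=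
    fun i x hx => (hsq i x hx).inv (hne i x)
  -- differentiability of the single-variable compositions
  have hudiff : ∀ (i : Fin n) (x : Fin n → ℝ),
      DifferentiableAt ℝ (fun q' : Fin n → ℝ => u i (q' i)) x := by
    intro i x
    exact DifferentiableAt.comp x ((hu i).differentiable (by simp) (x i))
      (differentiableAt_apply i x)
  -- differentiability of the partial derivatives of the inverse squares
  have hpdg : ∀ (m : Fin n) (i : Fin n), ∀ x ∈ U,
      DifferentiableAt ℝ (fun q' => pd m (fun q'' => ((h i q'') ^ 2)⁻¹) q') x := by
    intro m i x hx
    have h1 : ContDiffAt ℝ 1 (fun q' => fderiv ℝ (fun q'' => ((h i q'') ^ 2)⁻¹) q') x :=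
      (hgx i x hx).fderiv_right (WithTop.coe_le_coe.mpr le_top)
    have h2 := h1.clm_apply (contDiffAt_const (c := (Pi.single m 1 : Fin n → ℝ)))
    exact (h2.differentiableAt one_ne_zero)
  -- differentiability of the `S` sums
  have hSdiff : ∀ (m : Fin n), ∀ x ∈ U,
      DifferentiableAt ℝ
        (fun q' => ∑ i, pd m (fun q'' => ((h i q'') ^ 2)⁻¹) q' * u i (q' i)) x := by
    intro m x hx
    exact DifferentiableAt.fun_sum fun i _ => (hpdg m i x hx).mul (hudiff i x)
  -- Step A: the `j`-derivative of `hₖ² Sₖ` vanishes on U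
  have hderivk : DifferentiableAt ℝ (deriv (u k)) (q k) := by
    have h1 : ContDiff ℝ ∞ (deriv (u k)) :=
      (contDiff_infty_iff_deriv.mp ((hu k).of_le (by simp))).2
    exact h1.differentiable (by norm_num) (q k)
  have hEq : ∀ x ∈ U, deriv (u k) (x k)
      = -((h k x) ^ 2 * ∑ i, pd k (fun q'' => ((h i q'') ^ 2)⁻¹) x * u i (x i)) := by
    intro x hx
    have h1 := hsolve k k x hx
    rw [pd_comp_single k k (u k) x ((hu k).differentiable (by simp) (x k))] at h1
    simpa using h1
  have h0 : pd j (fun x => deriv (u k) (x k)) q = 0 := by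
    rw [pd_comp_single k j (deriv (u k)) q hderivk]
    simp [hjk.symm]
  have keyA : pd j (fun x => (h k x) ^ 2
      * ∑ i, pd k (fun q'' => ((h i q'') ^ 2)⁻¹) x * u i (x i)) q = 0 := by
    have h1 := pd_congr_open hU hq hEq j
    rw [h0] at h1
    have h2 := pd_neg j
      (fun x => (h k x) ^ 2 * ∑ i, pd k (fun q'' => ((h i q'') ^ 2)⁻¹) x * u i (x i)) q
    rw [← h1] at h2
    linarith
  -- Step B: product rule
  have hk2diff : DifferentiableAt ℝ (fun q' => (h k q') ^ 2) q :=
    (hsq k q hq).differentiableAt (by simp)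
  have keyB : pd j (fun q' => (h k q') ^ 2) q
        * (∑ i, pd k (fun q'' => ((h i q'') ^ 2)⁻¹) q * u i (q i))
      + (h k q) ^ 2
        * pd j (fun x => ∑ i, pd k (fun q'' => ((h i q'') ^ 2)⁻¹) x * u i (x i)) q = 0 := by
    rw [← pd_mul j hk2diff (hSdiff k q hq)]
    exact keyA
  -- Step C: expand the derivative of the sum
  have keyC : pd j (fun x => ∑ i, pd k (fun q'' => ((h i q'') ^ 2)⁻¹) x * u i (x i)) q
      = (∑ i, pd j (fun q' => pd k (fun q'' => ((h i q'') ^ 2)⁻¹) q') q * u i (q i))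
        + pd k (fun q'' => ((h j q'') ^ 2)⁻¹) q
          * -((h j q) ^ 2 * ∑ i, pd j (fun q'' => ((h i q'') ^ 2)⁻¹) q * u i (q i)) := by
    rw [pd_sum j (F := fun i q' => pd k (fun q'' => ((h i q'') ^ 2)⁻¹) q' * u i (q' i))
      (fun i => (hpdg k i q hq).mul (hudiff i q))]
    have hterm : ∀ i : Fin n,
        pd j (fun q' => pd k (fun q'' => ((h i q'') ^ 2)⁻¹) q' * u i (q' i)) q
          = pd j (fun q' => pd k (fun q'' => ((h i q'') ^ 2)⁻¹) q') q * u i (q i)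
            + pd k (fun q'' => ((h i q'') ^ 2)⁻¹) q
              * -(if j = i then
                  (h j q) ^ 2 * ∑ i', pd j (fun q'' => ((h i' q'') ^ 2)⁻¹) q * u i' (q i')
                 else 0) := by
      intro i
      rw [pd_mul j (hpdg k i q hq) (hudiff i q), hsolve i j q hq]
    rw [Finset.sum_congr rfl fun i _ => hterm i]
    rw [Finset.sum_add_distrib]
    congr 1
    rw [Finset.sum_eq_single j]
    · simp
    · intro i _ hij
      simp [Ne.symm hij]
    · simp
  -- rewrite `pd k ((h j)²)⁻¹` via the chain rule for inversion
  have hj2diff : DifferentiableAt ℝ (fun q' => (h j q') ^ 2) q :=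
    (hsq j q hq).differentiableAt (by simp)
  have hinvj : pd k (fun q'' => ((h j q'') ^ 2)⁻¹) q
      = -(((h j q) ^ 2) ^ 2)⁻¹ * pd k (fun q' => (h j q') ^ 2) q :=
    pd_comp k (hasDerivAt_inv (hne j q)) hj2diff
  -- logarithmic derivatives
  have hlog1 : pd j (fun q' => Real.log ((h k q') ^ 2)) q
      = ((h k q) ^ 2)⁻¹ * pd j (fun q' => (h k q') ^ 2) q :=
    pd_comp j (Real.hasDerivAt_log (hne k q)) hk2diff
  have hlog2 : pd k (fun q' => Real.log ((h j q') ^ 2)) q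
      = ((h j q) ^ 2)⁻¹ * pd k (fun q' => (h j q') ^ 2) q :=
    pd_comp k (Real.hasDerivAt_log (hne j q)) hj2diff
  -- assemble
  have hgoal : ∀ i : Fin n, Dst h j k (fun q' => ((h i q') ^ 2)⁻¹) q
      = pd j (fun q' => pd k (fun q'' => ((h i q'') ^ 2)⁻¹) q') q
        + ((h k q) ^ 2)⁻¹ * pd j (fun q' => (h k q') ^ 2) q
          * pd k (fun q'' => ((h i q'') ^ 2)⁻¹) q
        + ((h j q) ^ 2)⁻¹ * pd k (fun q' => (h j q') ^ 2) q
          * pd j (fun q'' => ((h i q'') ^ 2)⁻¹) q := by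
    intro i
    rw [Dst, hlog1, hlog2]
  rw [Finset.sum_congr rfl fun i _ => by rw [hgoal i]]
  refine final_alg
    (fun i => pd j (fun q' => pd k (fun q'' => ((h i q'') ^ 2)⁻¹) q') q)
    (fun i => pd k (fun q'' => ((h i q'') ^ 2)⁻¹) q)
    (fun i => pd j (fun q'' => ((h i q'') ^ 2)⁻¹) q)
    (fun i => u i (q i))
    (pd j (fun q' => (h k q') ^ 2) q) (pd k (fun q' => (h j q') ^ 2) q)
    ((h k q) ^ 2) ((h j q) ^ 2) (hne k q) (hne j q) ?_
  rw [← hinvj, ← keyC]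
  exact keyB
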